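/- arXiv:2005.07556 — 2 statements merged into one kernel-verified Lean document; each statement's English description precedes it below -/
import Mathlib

section
/- Let X = (X₁,…,X_d) be a strict row contraction of n×n complex matrices and let s ≥ 1. Then for every H ∈ M_n(ℂ), B̆_sᵀ·(P_X ⊗ I_s ⊗ (H − Σᵢ₌₁^d Xᵢ H Xᵢ*))·B̆_s = H ⊗ I_s, where B̆_s denotes the ampliated boomerang matrix. -/
/-!
Write `Φ(V) = Σᵢ Xᵢ V Xᵢ*`. In `vec` coordinates `I − Σᵢ conj(Xᵢ) ⊗ Xᵢ` acts as `I − Φ`, and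
factoring `Φ(V) = R (I ⊗ V) R*` through the row `R = [X₁ ⋯ X_d]` gives
`‖Φ(V)‖ ≤ ‖Φ(I)‖ ‖V‖`, so `I − Φ` is invertible for a strict row contraction. Compressing by
`B̆_s` contracts `P_X` against `H − Φ(H)`; by the definition of `ψ` this contraction is
`(I − Φ)⁻¹` applied to `(I − Φ)(H)`, i.e. `H`, while the `I_s` factor rides along.
-/

open Matrix Filter
open scoped Kronecker Matrix.Norms.L2Operator ComplexOrder

noncomputable section

/-- Square `n × n` complex matrices. -/
abbrev Mat (n : ℕ) := Matrix (Fin n) (Fin n) ℂ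

/-- Entrywise complex conjugate of a matrix. -/
def conjM {m k : Type*} (A : Matrix m k ℂ) : Matrix m k ℂ := A.map (starRingEnd ℂ)

/-- `vec A` stacks the columns of `A`: the slot `(j, i)` (column `j`, row `i`) holds `A i j`. -/
def vecM (n : ℕ) (A : Mat n) : Matrix (Fin n × Fin n) Unit ℂ := Matrix.of fun p _ => A p.2 p.1

/-- The `ψ`-involution on `M_{n²}(ℂ)`: the linear map determined on matrix units by
`ψ(E_{ij} ⊗ E_{kℓ}) = E_{ℓj} ⊗ E_{ki}`, equivalently `ψ(A ⊗ B) = vec(B)·vec(A)ᵀ`. -/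
def psi (n : ℕ) (U : Matrix (Fin n × Fin n) (Fin n × Fin n) ℂ) :
    Matrix (Fin n × Fin n) (Fin n × Fin n) ℂ :=
  Matrix.of fun p q => U (q.2, p.2) (q.1, p.1)

/-- `X` is a strict row contraction: `‖Σᵢ Xᵢ Xᵢ*‖ < 1` in the L² operator norm. -/
def StrictRowContraction {n : ℕ} {ι : Type*} [Fintype ι] (X : ι → Mat n) : Prop :=
  ‖∑ i, X i * (X i)ᴴ‖ < 1

/-- The elementary Pick matrix `P_X = ψ((I_{n²} − Σᵢ conj(Xᵢ) ⊗ Xᵢ)⁻¹)`. -/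
def pick {n : ℕ} {ι : Type*} [Fintype ι] (X : ι → Mat n) :
    Matrix (Fin n × Fin n) (Fin n × Fin n) ℂ :=
  psi n ((1 - ∑ i, conjM (X i) ⊗ₖ X i)⁻¹)

/-- The Choi matrix `𝔠_n = Σ_{i,j} E_{ij} ⊗ E_{ij} ∈ M_{n²}(ℂ)`. -/
def choiM (n : ℕ) : Matrix (Fin n × Fin n) (Fin n × Fin n) ℂ :=
  ∑ i : Fin n, ∑ j : Fin n, single i j (1 : ℂ) ⊗ₖ single i j (1 : ℂ)

/-- `X^w = X_{i₁} ⋯ X_{i_k}` for a word `w = i₁⋯i_k` in the free monoid. -/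
def wordProd {n : ℕ} {ι : Type*} (X : ι → Mat n) (w : List ι) : Mat n := (w.map X).prod

/-- Kronecker product `A ⊗ C` where `A` carries a product index, with the resulting
index types flattened right-associatively (`(a × b) × c ↦ a × (b × c)`). -/
def krA {a b c a' b' c' : Type*} (A : Matrix (a × b) (a' × b') ℂ) (C : Matrix c c' ℂ) :
    Matrix (a × b × c) (a' × b' × c') ℂ :=
  Matrix.of fun p q => A (p.1, p.2.1) (q.1, q.2.1) * C p.2.2 q.2.2

/-- Kronecker product `M ⊗ C` where `M` carries a triple product index, flattened
right-associatively. -/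
def krT {a b c e a' b' c' e' : Type*} (M : Matrix (a × b × c) (a' × b' × c') ℂ)
    (C : Matrix e e' ℂ) : Matrix (a × b × c × e) (a' × b' × c' × e') ℂ :=
  Matrix.of fun p q => M (p.1, p.2.1, p.2.2.1) (q.1, q.2.1, q.2.2.1) * C p.2.2.2 q.2.2.2

/-- Triple Kronecker product `A ⊗ B ⊗ C` with right-associated index types. -/
def kr3 {a b c a' b' c' : Type*} (A : Matrix a a' ℂ) (B : Matrix b b' ℂ) (C : Matrix c c' ℂ) :
    Matrix (a × b × c) (a' × b' × c') ℂ :=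
  Matrix.of fun p q => A p.1 q.1 * B p.2.1 q.2.1 * C p.2.2 q.2.2

/-- The boomerang matrix `B̆ = Σ_{i,j} e_i ⊗ e_j ⊗ E_{ij} ∈ M_{n³×n}(ℂ)`:
its entry at row `(i, j, k)`, column `ℓ` is `δ_{k i} δ_{ℓ j}`. -/
def boom (n : ℕ) : Matrix (Fin n × Fin n × Fin n) (Fin n) ℂ :=
  Matrix.of fun p l => if p.2.2 = p.1 ∧ l = p.2.1 then 1 else 0

/-- The commutation (permutation) matrix `Q_{n,r}`, satisfying
`Q_{n,r} (U ⊗ V) Q_{n,r}ᵀ = V ⊗ U` for `U ∈ M_n`, `V ∈ M_r`. -/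
def commMat (n r : ℕ) : Matrix (Fin r × Fin n) (Fin n × Fin r) ℂ :=
  Matrix.of fun p q => if p.2 = q.1 ∧ p.1 = q.2 then 1 else 0

/-- `Σ_{i,j} e_i ⊗ e_j ⊗ I_r ⊗ E_{ij}`: its entry at row `(i, j, a, k)`, column `(b, ℓ)`
is `δ_{k i} δ_{ℓ j} δ_{a b}`. -/
def preBoom (n r : ℕ) : Matrix (Fin n × Fin n × Fin r × Fin n) (Fin r × Fin n) ℂ :=
  Matrix.of fun p q => if p.2.2.2 = p.1 ∧ q.2 = p.2.1 ∧ p.2.2.1 = q.1 then 1 else 0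

/-- The ampliated boomerang matrix `B̆_r = (Σ_{i,j} e_i ⊗ e_j ⊗ I_r ⊗ E_{ij}) · Q_{n,r}`. -/
def boomAmp (n r : ℕ) : Matrix (Fin n × Fin n × Fin r × Fin n) (Fin n × Fin r) ℂ :=
  preBoom n r * commMat n r

/-- `B` is the Moore–Penrose pseudoinverse of `A` (the four Penrose conditions). -/
structure IsMoorePenroseInv {m k : Type*} [Fintype m] [Fintype k]
    (A : Matrix m k ℂ) (B : Matrix k m ℂ) : Prop where
  mul_inv_mul : A * B * A = A
  inv_mul_inv : B * A * B = B
  hermitian_mul_inv : (A * B)ᴴ = A * B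
  hermitian_inv_mul : (B * A)ᴴ = B * A

namespace Matrix

def oneKroneckerStarAlgHom (ι m : Type*) [Fintype ι] [DecidableEq ι] [Fintype m]
    [DecidableEq m] : Matrix m m ℂ →⋆ₐ[ℂ] Matrix (ι × m) (ι × m) ℂ where
  toFun V := (1 : Matrix ι ι ℂ) ⊗ₖ V
  map_one' := one_kronecker_one
  map_mul' V W := by rw [← mul_kronecker_mul, one_mul]
  map_zero' := kronecker_zero _
  map_add' := kronecker_add _
  commutes' r := by
    simp only [algebraMap_eq_diagonal, Pi.algebraMap_def, Algebra.algebraMap_self,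
      RingHom.id_apply, ← smul_one_eq_diagonal]
    rw [kronecker_smul, one_kronecker_one]
  map_star' V := by simp [star_eq_conjTranspose, conjTranspose_kronecker]

variable {ι m : Type*} [Fintype ι] [Fintype m]

lemma l2_opNorm_one_kronecker_le [DecidableEq ι] [DecidableEq m] (V : Matrix m m ℂ) :
    ‖(1 : Matrix ι ι ℂ) ⊗ₖ V‖ ≤ ‖V‖ :=
  NonUnitalStarAlgHom.norm_apply_le (oneKroneckerStarAlgHom ι m) V

def rowBlocks (X : ι → Matrix m m ℂ) : Matrix m (ι × m) ℂ :=
  of fun a q => X q.1 a q.2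

lemma rowBlocks_mul_one_kronecker_mul_conjTranspose [DecidableEq ι] (X : ι → Matrix m m ℂ)
    (V : Matrix m m ℂ) :
    rowBlocks X * ((1 : Matrix ι ι ℂ) ⊗ₖ V) * (rowBlocks X)ᴴ = ∑ i, X i * V * (X i)ᴴ := by
  ext a b
  simp only [rowBlocks, mul_apply, conjTranspose_apply, of_apply, kroneckerMap_apply, one_apply,
    sum_apply, Fintype.sum_prod_type, mul_ite, ite_mul, one_mul, mul_zero, zero_mul,
    Finset.sum_mul, Finset.sum_ite_irrel, Finset.sum_const_zero, Finset.sum_ite_eq',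
    Finset.mem_univ, if_true]

lemma norm_sum_mul_mul_conjTranspose_le [DecidableEq m] (X : ι → Matrix m m ℂ)
    (V : Matrix m m ℂ) :
    ‖∑ i, X i * V * (X i)ᴴ‖ ≤ ‖∑ i, X i * (X i)ᴴ‖ * ‖V‖ := by
  classical
  have hR : ‖∑ i, X i * (X i)ᴴ‖ = ‖rowBlocks X‖ * ‖rowBlocks X‖ := by
    have h := rowBlocks_mul_one_kronecker_mul_conjTranspose X 1
    simp only [one_kronecker_one, mul_one] at h
    rw [← h, ← l2_opNorm_conjTranspose (rowBlocks X)]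
    simpa using l2_opNorm_conjTranspose_mul_self (rowBlocks X)ᴴ
  rw [hR, ← rowBlocks_mul_one_kronecker_mul_conjTranspose]
  calc ‖rowBlocks X * ((1 : Matrix ι ι ℂ) ⊗ₖ V) * (rowBlocks X)ᴴ‖
      ≤ ‖rowBlocks X‖ * ‖(1 : Matrix ι ι ℂ) ⊗ₖ V‖ * ‖(rowBlocks X)ᴴ‖ :=
        (l2_opNorm_mul _ _).trans (mul_le_mul_of_nonneg_right (l2_opNorm_mul _ _) (norm_nonneg _))
    _ ≤ ‖rowBlocks X‖ * ‖V‖ * ‖rowBlocks X‖ := by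
        rw [l2_opNorm_conjTranspose]
        gcongr
        exact l2_opNorm_one_kronecker_le V
    _ = _ := by ring

lemma eq_zero_of_sum_mul_mul_conjTranspose_eq [DecidableEq m] {X : ι → Matrix m m ℂ}
    (hX : ‖∑ i, X i * (X i)ᴴ‖ < 1) {V : Matrix m m ℂ} (hV : ∑ i, X i * V * (X i)ᴴ = V) :
    V = 0 := by
  have h := norm_sum_mul_mul_conjTranspose_le X V
  rw [hV] at h
  exact norm_eq_zero.mp <| by nlinarith [norm_nonneg V]

lemma one_sub_sum_conjM_kronecker_mulVec_vec [DecidableEq m] (X : ι → Matrix m m ℂ)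
    (V : Matrix m m ℂ) :
    (1 - ∑ i, conjM (X i) ⊗ₖ X i) *ᵥ vec V = vec (V - ∑ i, X i * V * (X i)ᴴ) := by
  have hconj (A : Matrix m m ℂ) : conjM A = (Aᴴ)ᵀ := rfl
  simp only [sub_mulVec, one_mulVec, sum_mulVec, hconj, kronecker_mulVec_vec, transpose_transpose,
    vec_sub, vec_sum]

lemma isUnit_det_one_sub_sum_conjM_kronecker [DecidableEq m] {X : ι → Matrix m m ℂ}
    (hX : ‖∑ i, X i * (X i)ᴴ‖ < 1) : IsUnit (1 - ∑ i, conjM (X i) ⊗ₖ X i).det := by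
  rw [isUnit_iff_ne_zero, Ne, ← exists_mulVec_eq_zero_iff]
  rintro ⟨v, hv0, hv⟩
  obtain ⟨V, rfl⟩ := vec_bijective.surjective v
  rw [one_sub_sum_conjM_kronecker_mulVec_vec, vec_eq_zero_iff, sub_eq_zero] at hv
  exact hv0 (vec_eq_zero_iff.mpr (eq_zero_of_sum_mul_mul_conjTranspose_eq hX hv.symm))

end Matrix

lemma sum_psi_mul_apply {n : ℕ} (U : Matrix (Fin n × Fin n) (Fin n × Fin n) ℂ) (W : Mat n)
    (b b' : Fin n) :
    ∑ i, ∑ i', psi n U (i, b) (i', b') * W i i' = (U *ᵥ vec W) (b', b) := by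
  simp only [psi, of_apply, mulVec, dotProduct, vec, Fintype.sum_prod_type]
  exact Finset.sum_comm

lemma sum_pick_mul_apply {n : ℕ} {ι : Type*} [Fintype ι] {X : ι → Mat n}
    (hX : StrictRowContraction X) (H : Mat n) (b b' : Fin n) :
    ∑ i, ∑ i', pick X (i, b) (i', b') * (H - ∑ k, X k * H * (X k)ᴴ) i i' = H b b' := by
  rw [pick, sum_psi_mul_apply, ← one_sub_sum_conjM_kronecker_mulVec_vec, mulVec_mulVec,
    nonsing_inv_mul _ (isUnit_det_one_sub_sum_conjM_kronecker hX), one_mulVec, vec]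

lemma boomAmp_apply (n r : ℕ) (p : Fin n × Fin n × Fin r × Fin n) (q : Fin n × Fin r) :
    boomAmp n r p q = if p.2.2.2 = p.1 ∧ p.2.1 = q.1 ∧ p.2.2.1 = q.2 then 1 else 0 := by
  obtain ⟨i, j, a, k⟩ := p
  obtain ⟨b, l⟩ := q
  simp only [boomAmp, preBoom, commMat, mul_apply, of_apply, Fintype.sum_prod_type, ite_and]
  by_cases hk : k = i <;> simp [hk, mul_ite, Finset.sum_ite_eq, eq_comm]

lemma boomAmp_transpose_mul_mul_boomAmp_apply {n r : ℕ}
    (M : Matrix (Fin n × Fin n × Fin r × Fin n) (Fin n × Fin n × Fin r × Fin n) ℂ)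
    (b b' : Fin n) (l l' : Fin r) :
    ((boomAmp n r)ᵀ * M * boomAmp n r) (b, l) (b', l') =
      ∑ i, ∑ i', M (i, b, l, i) (i', b', l', i') := by
  simp only [mul_apply, transpose_apply, boomAmp_apply, Fintype.sum_prod_type, ite_and, ite_mul,
    mul_ite, zero_mul, mul_zero, one_mul, mul_one, Finset.sum_ite_eq', Finset.mem_univ, if_true,
    Finset.sum_ite_irrel, Finset.sum_const_zero]
  exact Finset.sum_comm

theorem ampliated_boomerang_pick_compression_general {n d s : ℕ}
    (X : Fin d → Mat n) (hX : StrictRowContraction X) (H : Mat n) :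
    (boomAmp n s)ᵀ *
        krT (krA (pick X) (1 : Matrix (Fin s) (Fin s) ℂ)) (H - ∑ i, X i * H * (X i)ᴴ) *
        boomAmp n s =
      H ⊗ₖ (1 : Matrix (Fin s) (Fin s) ℂ) := by
  ext ⟨b, l⟩ ⟨b', l'⟩
  rw [boomAmp_transpose_mul_mul_boomAmp_apply]
  simp only [krT, krA, of_apply, kroneckerMap_apply, one_apply]
  split_ifs
  · simpa only [mul_one] using sum_pick_mul_apply hX H b b'
  · simp only [mul_zero, zero_mul, Finset.sum_const_zero]

/-- For a strict row contraction `X`, `s ≥ 1`, and every `H ∈ M_n(ℂ)`,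
`B̆_sᵀ·(P_X ⊗ I_s ⊗ (H − Σᵢ Xᵢ H Xᵢ*))·B̆_s = H ⊗ I_s`. -/
theorem ampliated_boomerang_pick_compression {n d s : ℕ} (hs : 1 ≤ s)
    (X : Fin d → Mat n) (hX : StrictRowContraction X) (H : Mat n) :
    (boomAmp n s)ᵀ *
        krT (krA (pick X) (1 : Matrix (Fin s) (Fin s) ℂ)) (H - ∑ i, X i * H * (X i)ᴴ) *
        boomAmp n s =
      H ⊗ₖ (1 : Matrix (Fin s) (Fin s) ℂ) :=
  ampliated_boomerang_pick_compression_general X hX H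
end
end

section
/- (The Choi point) Fix n > 1 and let d = n². Consider the d-tuple X of n×n matrices X_{(i,j)} = (1/√n)·E_{ij}, 1 ≤ i,j ≤ n. Then X is a row co-isometry (Σ_{i,j} X_{(i,j)}X_{(i,j)}* = I_n), and for every 0 < t < 1 the elementary Pick matrix of tX is P_{tX} = 𝔠_n + (t²/(n(1−t²)))·I_{n²}; consequently lim_{t→1⁻} ((1−t²)/t²)·P_{tX} = (1/n)·I_{n²}. -/
/-!
Common definitions: the ψ-involution, `vec`, the elementary Pick matrix, the Choi matrix,
Kronecker-product helpers with right-associated index types, the boomerang matrices, the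
commutation matrix, and the Moore–Penrose predicate.
-/

open Matrix Filter
open scoped Kronecker Matrix.Norms.L2Operator ComplexOrder

noncomputable section

/-- The Choi point: the `n²`-tuple of `n×n` matrices `X_{(i,j)} = (1/√n)·E_{ij}`. -/
def choiPoint (n : ℕ) : Fin n × Fin n → Mat n :=
  fun p => ((Real.sqrt n : ℂ))⁻¹ • single p.1 p.2 (1 : ℂ)

/-!
The Kronecker sum `Σ conj(tXₚ) ⊗ tXₚ` is `(t²/n)·𝔠_n`, and `𝔠_n² = n·𝔠_n`, so
`(I − (t²/n)·𝔠_n)⁻¹ = I + (t²/(n(1−t²)))·𝔠_n`. The involution `ψ` exchanges `I` and `𝔠_n`, which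
gives `P_{tX} = 𝔠_n + (t²/(n(1−t²)))·I`; after scaling by `(1−t²)/t²` the `𝔠_n` term vanishes
as `t → 1`.
-/

open Topology

namespace Matrix

variable {m R : Type*} [Fintype m] [DecidableEq m] [Field R]

theorem inv_one_sub_smul_of_mul_self_eq_smul {P : Matrix m m R} {k a : R}
    (hP : P * P = k • P) (ha : a * k ≠ 1) :
    (1 - a • P)⁻¹ = 1 + (a / (1 - a * k)) • P := by
  have hb : a / (1 - a * k) - a - a * (a / (1 - a * k)) * k = 0 := by
    field_simp [sub_ne_zero.2 ha.symm]
    ring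
  refine inv_eq_right_inv ?_
  calc (1 - a • P) * (1 + (a / (1 - a * k)) • P)
      = 1 + (a / (1 - a * k) - a - a * (a / (1 - a * k)) * k) • P := by
        rw [sub_mul, one_mul, mul_add, mul_one, smul_mul_smul_comm, hP]
        module
    _ = 1 := by rw [hb, zero_smul, add_zero]

end Matrix

theorem choiM_apply (n : ℕ) (p q : Fin n × Fin n) :
    choiM n p q = if p.1 = p.2 ∧ q.1 = q.2 then 1 else 0 := by
  simp only [choiM, Matrix.sum_apply, kroneckerMap_apply, single, of_apply, ite_and]
  rw [Finset.sum_comm]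
  simp [eq_comm]

theorem choiM_mul_self (n : ℕ) : choiM n * choiM n = (n : ℂ) • choiM n := by
  ext p q
  simp only [mul_apply, choiM_apply, Matrix.smul_apply, smul_eq_mul]
  by_cases hp : p.1 = p.2 <;> by_cases hq : q.1 = q.2 <;>
    simp [hp, hq, Fintype.sum_prod_type, Finset.sum_ite_eq]

theorem psi_add (n : ℕ) (A B : Matrix (Fin n × Fin n) (Fin n × Fin n) ℂ) :
    psi n (A + B) = psi n A + psi n B := rfl

theorem psi_smul (n : ℕ) (c : ℂ) (A : Matrix (Fin n × Fin n) (Fin n × Fin n) ℂ) :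
    psi n (c • A) = c • psi n A := rfl

theorem psi_one (n : ℕ) : psi n 1 = choiM n := by
  ext p q
  simp [psi, choiM_apply, one_apply, Prod.ext_iff, and_comm, eq_comm]

theorem psi_choiM (n : ℕ) : psi n (choiM n) = 1 := by
  ext p q
  simp [psi, choiM_apply, one_apply, Prod.ext_iff, eq_comm, and_comm]

theorem pick_of_sum_kronecker_eq_smul_choiM {n : ℕ} {ι : Type*} [Fintype ι] {X : ι → Mat n}
    {a : ℂ} (hX : ∑ i, conjM (X i) ⊗ₖ X i = a • choiM n) (ha : a * n ≠ 1) :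
    pick X = choiM n + (a / (1 - a * n)) • 1 := by
  rw [pick, hX, inv_one_sub_smul_of_mul_self_eq_smul (choiM_mul_self n) ha, psi_add, psi_smul,
    psi_one, psi_choiM]

theorem ofReal_sqrt_natCast_inv_mul_self (n : ℕ) :
    ((√n : ℝ) : ℂ)⁻¹ * ((√n : ℝ) : ℂ)⁻¹ = (n : ℂ)⁻¹ := by
  rw [← mul_inv, ← Complex.ofReal_mul, Real.mul_self_sqrt n.cast_nonneg, Complex.ofReal_natCast]

theorem conjM_ofReal_smul {m k : Type*} (t : ℝ) (A : Matrix m k ℂ) :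
    conjM ((t : ℂ) • A) = (t : ℂ) • conjM A := by
  ext i j
  simp [conjM]

theorem conjM_choiPoint (n : ℕ) (p : Fin n × Fin n) : conjM (choiPoint n p) = choiPoint n p := by
  rw [choiPoint, ← Complex.ofReal_inv, conjM_ofReal_smul]
  congr 1
  ext i j
  simp [conjM, single, apply_ite]

theorem choiPoint_mul_conjTranspose (n : ℕ) (p : Fin n × Fin n) :
    choiPoint n p * (choiPoint n p)ᴴ = (n : ℂ)⁻¹ • single p.1 p.1 1 := by
  simp [choiPoint, ofReal_sqrt_natCast_inv_mul_self]

theorem sum_choiPoint_mul_conjTranspose (n : ℕ) :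
    ∑ p, choiPoint n p * (choiPoint n p)ᴴ = 1 := by
  calc ∑ p, choiPoint n p * (choiPoint n p)ᴴ
      = ∑ i : Fin n, ((n : ℂ) * (n : ℂ)⁻¹) • single i i (1 : ℂ) := by
        simp [choiPoint_mul_conjTranspose, Fintype.sum_prod_type, mul_smul]
    _ = ∑ i : Fin n, single i i 1 :=
        Finset.sum_congr rfl fun i _ => by
          rw [mul_inv_cancel₀ (Nat.cast_ne_zero.2 i.pos.ne'), one_smul]
    _ = 1 := sum_single_one

theorem sum_kronecker_smul_choiPoint (n : ℕ) (t : ℝ) :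
    ∑ p, conjM ((t : ℂ) • choiPoint n p) ⊗ₖ ((t : ℂ) • choiPoint n p) =
      ((t ^ 2 / n : ℝ) : ℂ) • choiM n := by
  have hp (p : Fin n × Fin n) : choiPoint n p ⊗ₖ choiPoint n p =
      (n : ℂ)⁻¹ • (single p.1 p.2 (1 : ℂ) ⊗ₖ single p.1 p.2 (1 : ℂ)) := by
    simp only [choiPoint]
    rw [smul_kronecker, kronecker_smul, smul_smul, ofReal_sqrt_natCast_inv_mul_self]
  simp only [conjM_ofReal_smul, conjM_choiPoint, smul_kronecker, kronecker_smul, hp, smul_smul,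
    ← Finset.smul_sum, choiM, Fintype.sum_prod_type]
  congr 1
  push_cast
  ring

theorem pick_smul_choiPoint {n : ℕ} (hn : n ≠ 0) {t : ℝ} (ht : t ^ 2 ≠ 1) :
    pick (fun p => (t : ℂ) • choiPoint n p) =
      choiM n + ((t ^ 2 / (n * (1 - t ^ 2)) : ℝ) : ℂ) • 1 := by
  have hn' : (n : ℝ) ≠ 0 := Nat.cast_ne_zero.2 hn
  have hprod : ((t ^ 2 / n : ℝ) : ℂ) * n = ((t ^ 2 : ℝ) : ℂ) := by
    rw [← Complex.ofReal_natCast, ← Complex.ofReal_mul, div_mul_cancel₀ _ hn']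
  rw [pick_of_sum_kronecker_eq_smul_choiM (sum_kronecker_smul_choiPoint n t)
    (by rw [hprod]; exact_mod_cast ht), hprod]
  push_cast
  rw [div_div]

theorem tendsto_smul_pick_smul_choiPoint {n : ℕ} (hn : n ≠ 0) :
    Tendsto (fun t : ℝ => (((1 - t ^ 2) / t ^ 2 : ℝ) : ℂ) • pick (fun p => (t : ℂ) • choiPoint n p))
      (𝓝[Set.Ioo 0 1] 1) (𝓝 (((n : ℝ)⁻¹ : ℂ) • 1)) := by
  have hpick : ∀ t ∈ Set.Ioo (0 : ℝ) 1,
      (((1 - t ^ 2) / t ^ 2 : ℝ) : ℂ) • choiM n + ((n : ℝ)⁻¹ : ℂ) • 1 =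
        (((1 - t ^ 2) / t ^ 2 : ℝ) : ℂ) • pick (fun p => (t : ℂ) • choiPoint n p) := by
    rintro t ⟨ht0, ht1⟩
    have ht : t ^ 2 ≠ 1 := by nlinarith
    rw [pick_smul_choiPoint hn ht, smul_add, smul_smul, ← Complex.ofReal_mul, ← Complex.ofReal_inv]
    congr 3
    field_simp [sub_ne_zero.2 ht.symm]
  have hcoef : Tendsto (fun t : ℝ => (((1 - t ^ 2) / t ^ 2 : ℝ) : ℂ)) (𝓝[Set.Ioo 0 1] 1) (𝓝 0) := by
    have hcont : ContinuousAt (fun t : ℝ => (((1 - t ^ 2) / t ^ 2 : ℝ) : ℂ)) 1 := by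
      fun_prop (disch := norm_num)
    simpa using hcont.tendsto.mono_left nhdsWithin_le_nhds
  have hlim := (hcoef.smul_const (choiM n)).add_const (((n : ℝ)⁻¹ : ℂ) • (1 : Matrix _ _ ℂ))
  rw [zero_smul, zero_add] at hlim
  exact hlim.congr' (eventually_nhdsWithin_of_forall hpick)

/-- **The Choi point.** For `n > 1` and `d = n²`, the tuple
`X_{(i,j)} = (1/√n)·E_{ij}` is a row co-isometry, for every `0 < t < 1` the elementary Pick
matrix of `tX` is `P_{tX} = 𝔠_n + (t²/(n(1−t²)))·I_{n²}`, and consequently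
`lim_{t→1⁻} ((1−t²)/t²)·P_{tX} = (1/n)·I_{n²}`. -/
theorem choi_point_pick {n : ℕ} (hn : 1 < n) :
    (∑ p : Fin n × Fin n, choiPoint n p * (choiPoint n p)ᴴ = (1 : Mat n)) ∧
    (∀ t : ℝ, t ∈ Set.Ioo (0 : ℝ) 1 →
      pick (fun p => (t : ℂ) • choiPoint n p) =
        choiM n + ((t ^ 2 / (n * (1 - t ^ 2)) : ℝ) : ℂ) •
          (1 : Matrix (Fin n × Fin n) (Fin n × Fin n) ℂ)) ∧
    Filter.Tendsto
      (fun t : ℝ => (((1 - t ^ 2) / t ^ 2 : ℝ) : ℂ) • pick (fun p => (t : ℂ) • choiPoint n p))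
      (nhdsWithin 1 (Set.Ioo (0 : ℝ) 1))
      (nhds (((n : ℝ)⁻¹ : ℂ) • (1 : Matrix (Fin n × Fin n) (Fin n × Fin n) ℂ))) := by
  have hn0 : n ≠ 0 := by omega
  exact ⟨sum_choiPoint_mul_conjTranspose n,
    fun t ⟨ht0, ht1⟩ => pick_smul_choiPoint hn0 (by nlinarith),
    tendsto_smul_pick_smul_choiPoint hn0⟩
end
end
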